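/- Define a relation on the edges of a finite simple graph G by: e ~ f iff e = f or there is a cycle of G containing both e and f. Then this relation is an equivalence relation on the edge set of G. -/

import Mathlib

/-!
Suppose `e, f` lie on a cycle `C` and `f, g = xy` on a cycle `D`, with `g ∉ C`. Deleting `g` from
`D` leaves a path `P` from `y` to `x` through `f`, whose endpoints both lie on `C`. Let `a` be the
first and `b` the last vertex of `P` on `C`; then `a ≠ b` since `f` lies between them, and one of
the two arcs of `C` between `a` and `b` contains `e`. Following `P` from `y` to `a`, that arc to
`b`, then `P` to `x` and closing with `g` gives a cycle through `e` and `g`.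
-/

open SimpleGraph

/-- Edges `e` and `f` lie on a common cycle of `G`. -/
def OnCommonCycle {V : Type} (G : SimpleGraph V) (e f : Sym2 V) : Prop :=
  ∃ (w : V) (c : G.Walk w w), c.IsCycle ∧ e ∈ c.edges ∧ f ∈ c.edges

namespace SimpleGraph.Walk

variable {V : Type} {G : SimpleGraph V}

lemma IsCycle.exists_isPath_of_mem_edges {u x y : V} {c : G.Walk u u} (hc : c.IsCycle)
    (hxy : s(x, y) ∈ c.edges) :
    ∃ p : G.Walk y x, p.IsPath ∧ s(x, y) ∉ p.edges ∧ ∀ f ∈ c.edges, f = s(x, y) ∨ f ∈ p.edges := by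
  classical
  have hx := c.fst_mem_support_of_mem_edges hxy
  have hrot := c.rotate_edges x hx
  obtain ⟨d, hd, hdy, hdc⟩ :
      ∃ d : G.Walk x x, d.IsCycle ∧ d.snd = y ∧ ∀ f ∈ c.edges, f ∈ d.edges := by
    have hy : y ∈ (c.rotate x hx).toSubgraph.neighborSet x := by
      rwa [Subgraph.mem_neighborSet, adj_toSubgraph_iff_mem_edges, hrot.mem_iff]
    rw [(hc.rotate hx).neighborSet_toSubgraph_endpoint] at hy
    rcases hy with hy | hy
    · exact ⟨_, hc.rotate hx, hy.symm, fun f hf => hrot.mem_iff.mpr hf⟩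
    · refine ⟨_, (hc.rotate hx).reverse, by rw [snd_reverse, hy], fun f hf => ?_⟩
      rwa [edges_reverse, List.mem_reverse, hrot.mem_iff]
  obtain ⟨w, h, p, rfl⟩ := not_nil_iff.mp hd.not_nil
  obtain rfl : w = y := by simpa using hdy
  obtain ⟨hp, hxyp⟩ := (cons_isCycle_iff p h).mp hd
  exact ⟨p, hp, hxyp, fun f hf => by simpa using hdc f hf⟩

lemma exists_eq_append_of_mem_support {S : Set V} {u v w : V} (p : G.Walk u v)
    (hw : w ∈ p.support) (hwS : w ∈ S) :
    ∃ (a : V) (p₁ : G.Walk u a) (p₂ : G.Walk a v),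
      p = p₁.append p₂ ∧ a ∈ S ∧ ∀ z ∈ p₁.support, z ∈ S → z = a := by
  induction p with
  | nil =>
    obtain rfl : w = _ := by simpa using hw
    exact ⟨w, nil, nil, rfl, hwS, by simp⟩
  | @cons u u' v h q ih =>
    by_cases hu : u ∈ S
    · exact ⟨u, nil, cons h q, rfl, hu, by simp⟩
    have hwq : w ∈ q.support := by
      simp only [support_cons, List.mem_cons] at hw
      exact hw.resolve_left (by rintro rfl; exact hu hwS)
    obtain ⟨a, q₁, q₂, rfl, ha, hq₁⟩ := ih hwq
    refine ⟨a, cons h q₁, q₂, rfl, ha, fun z hz hzS => ?_⟩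
    rcases List.mem_cons.mp hz with rfl | hz
    · exact absurd hzS hu
    · exact hq₁ z hz hzS

lemma notMem_of_mem_edges_of_forall_mem_support {S : Set V} {u v a x y : V} {p : G.Walk u v}
    (hp : ∀ z ∈ p.support, z ∈ S → z = a) (hxy : s(x, y) ∈ p.edges) (hx : x ∈ S) : y ∉ S :=
  fun hy => (p.adj_of_mem_edges hxy).ne <|
    (hp x (p.fst_mem_support_of_mem_edges hxy) hx).trans
      (hp y (p.snd_mem_support_of_mem_edges hxy) hy).symm

lemma IsPath.exists_eq_append_append_of_mem_edges {S : Set V} {u v x y : V} {p : G.Walk u v}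
    (hp : p.IsPath) (hxy : s(x, y) ∈ p.edges) (hx : x ∈ S) (hy : y ∈ S) :
    ∃ (a b : V) (p₁ : G.Walk u a) (m : G.Walk a b) (p₂ : G.Walk b v),
      p = p₁.append (m.append p₂) ∧ a ≠ b ∧ a ∈ S ∧ b ∈ S ∧
      (∀ z ∈ p₁.support, z ∈ S → z = a) ∧ (∀ z ∈ p₂.support, z ∈ S → z = b) := by
  obtain ⟨a, p₁, q, rfl, ha, hp₁⟩ :=
    p.exists_eq_append_of_mem_support (p.fst_mem_support_of_mem_edges hxy) hx
  obtain ⟨b, r, m, hr, hb, hr'⟩ :=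
    q.reverse.exists_eq_append_of_mem_support q.reverse.end_mem_support ha
  obtain rfl : q = m.reverse.append r.reverse := by
    rw [← reverse_append, ← hr, reverse_reverse]
  have hp₂ : ∀ z ∈ r.reverse.support, z ∈ S → z = b := by
    simpa only [support_reverse, List.mem_reverse] using hr'
  refine ⟨a, b, p₁, m.reverse, r.reverse, rfl, ?_, ha, hb, hp₁, hp₂⟩
  rintro rfl
  have hm : m.reverse.edges = [] :=
    edges_eq_nil.mpr (isPath_iff_nil.mp hp.of_append_right.of_append_left)
  simp only [edges_append, hm, List.nil_append, List.mem_append] at hxy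
  rcases hxy with hxy | hxy
  · exact notMem_of_mem_edges_of_forall_mem_support hp₁ hxy hx hy
  · exact notMem_of_mem_edges_of_forall_mem_support hp₂ hxy hx hy

lemma IsPath.append_append_of_forall_mem_support {S : Set V} {u v a b : V}
    {p₁ : G.Walk u a} {m r : G.Walk a b} {p₂ : G.Walk b v} (hp : (p₁.append (m.append p₂)).IsPath)
    (hp₁ : ∀ z ∈ p₁.support, z ∈ S → z = a) (hp₂ : ∀ z ∈ p₂.support, z ∈ S → z = b)
    (hr : r.IsPath) (hrS : ∀ z ∈ r.support, z ∈ S) : (p₁.append (r.append p₂)).IsPath := by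
  have hpm := hp.support_nodup
  have hp₂' := hp.of_append_right.of_append_right.support_nodup
  have hr' := hr.support_nodup
  rw [support_append, tail_support_append, List.nodup_append, List.nodup_append] at hpm
  rw [← cons_tail_support] at hp₂' hr'
  rw [isPath_def, support_append, tail_support_append, List.nodup_append, List.nodup_append]
  have hrS' : ∀ z ∈ r.support.tail, z ∈ S := fun z hz => hrS z (List.mem_of_mem_tail hz)
  have hp₂S : ∀ z ∈ p₂.support.tail, z ∈ p₂.support := fun z hz => List.mem_of_mem_tail hz
  grind

lemma IsCycle.exists_isPath_mem_edges {u a b : V} {c : G.Walk u u} (hc : c.IsCycle)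
    (ha : a ∈ c.support) (hb : b ∈ c.support) (hab : a ≠ b) {e : Sym2 V} (he : e ∈ c.edges) :
    ∃ r : G.Walk a b, r.IsPath ∧ e ∈ r.edges ∧ r.support ⊆ c.support ∧ r.edges ⊆ c.edges := by
  classical
  set d := c.rotate a ha
  have hds : ∀ z, z ∈ d.support ↔ z ∈ c.support := fun z => mem_support_rotate_iff c a ha
  have hde : ∀ f, f ∈ d.edges ↔ f ∈ c.edges := fun f => (c.rotate_edges a ha).mem_iff
  have hb' : b ∈ d.support := (hds b).mpr hb
  have hsplit := d.take_spec hb'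
  have hd : ((d.takeUntil b hb').append (d.dropUntil b hb')).IsCycle := by
    rw [hsplit]; exact hc.rotate ha
  have he' : e ∈ (d.takeUntil b hb').edges ∨ e ∈ (d.dropUntil b hb').edges := by
    rw [← List.mem_append, ← edges_append, hsplit, hde]; exact he
  rcases he' with he' | he'
  · refine ⟨_, (hc.rotate ha).isPath_takeUntil hb', he', fun z hz => ?_, fun f hf => ?_⟩
    · exact (hds z).mp (d.support_takeUntil_subset_support hb' hz)
    · exact (hde f).mp (d.edges_takeUntil_subset_edges hb' hf)
  · refine ⟨_, (hd.isPath_of_append_right (not_nil_of_ne hab)).reverse, by simpa using he',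
      fun z hz => ?_, fun f hf => ?_⟩
    · rw [support_reverse, List.mem_reverse] at hz
      exact (hds z).mp (d.support_dropUntil_subset_support hb' hz)
    · rw [edges_reverse, List.mem_reverse] at hf
      exact (hde f).mp (d.edges_dropUntil_subset_edges hb' hf)

end SimpleGraph.Walk

open SimpleGraph.Walk

lemma OnCommonCycle.symm {V : Type} {G : SimpleGraph V} {e f : Sym2 V}
    (h : OnCommonCycle G e f) : OnCommonCycle G f e :=
  let ⟨w, c, hc, he, hf⟩ := h
  ⟨w, c, hc, hf, he⟩

lemma onCommonCycle_of_isCycle_of_notMem {V : Type} {G : SimpleGraph V} {u v : V}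
    {c : G.Walk u u} {d : G.Walk v v} {e f g : Sym2 V} (hc : c.IsCycle) (hd : d.IsCycle)
    (he : e ∈ c.edges) (hfc : f ∈ c.edges) (hfd : f ∈ d.edges) (hgd : g ∈ d.edges)
    (hgc : g ∉ c.edges) : OnCommonCycle G e g := by
  induction f using Sym2.ind with | _ p q => ?_
  induction g using Sym2.ind with | _ x y => ?_
  obtain ⟨P, hP, hgP, hdP⟩ := hd.exists_isPath_of_mem_edges hgd
  have hfP : s(p, q) ∈ P.edges := (hdP _ hfd).resolve_left fun h => hgc (by rwa [← h])
  obtain ⟨a, b, P₁, m, P₂, rfl, hab, ha, hb, hP₁, hP₂⟩ :=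
    hP.exists_eq_append_append_of_mem_edges (S := {z | z ∈ c.support}) hfP
      (c.fst_mem_support_of_mem_edges hfc) (c.snd_mem_support_of_mem_edges hfc)
  obtain ⟨r, hr, her, hrc, hre⟩ := hc.exists_isPath_mem_edges ha hb hab he
  have hpath := hP.append_append_of_forall_mem_support hP₁ hP₂ hr fun z hz => hrc hz
  refine ⟨x, cons (d.adj_of_mem_edges hgd) (P₁.append (r.append P₂)),
    (cons_isCycle_iff _ _).mpr ⟨hpath, ?_⟩, by simp [her], by simp⟩
  simp only [edges_append, List.mem_append] at hgP ⊢
  rintro (h | h | h)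
  · exact hgP (.inl h)
  · exact hgc (hre h)
  · exact hgP (.inr (.inr h))

theorem stmt5_general {V : Type} (G : SimpleGraph V) :
    Equivalence (fun e f : G.edgeSet => (e : Sym2 V) = (f : Sym2 V) ∨ OnCommonCycle G e f) := by
  refine ⟨fun _ => .inl rfl, fun h => h.imp Eq.symm OnCommonCycle.symm, ?_⟩
  rintro e f g (hef | ⟨u, c, hc, hec, hfc⟩) hfg
  · exact hef ▸ hfg
  rcases hfg with hfg | ⟨v, d, hd, hfd, hgd⟩
  · exact .inr (hfg ▸ ⟨u, c, hc, hec, hfc⟩)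
  by_cases hgc : (g : Sym2 V) ∈ c.edges
  · exact .inr ⟨u, c, hc, hec, hgc⟩
  · exact .inr (onCommonCycle_of_isCycle_of_notMem hc hd hec hfc hfd hgd hgc)

theorem stmt5 {V : Type} [Fintype V] (G : SimpleGraph V) :
    Equivalence (fun e f : G.edgeSet => (e : Sym2 V) = (f : Sym2 V) ∨ OnCommonCycle G e f) :=
  stmt5_general G
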